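/- Maximal daemonic gain for mixtures of Bell states: for the two-qubit state ρ_SA = (|00⟩⟨00| + |11⟩⟨11| + C(|00⟩⟨11| + |11⟩⟨00|))/2 with 0 ≤ C ≤ 1 and system Hamiltonian H_S = −σ_z, the reduced state is ρ_S = 1/2, so W = 0, while measuring the ancilla in the computational basis yields pure conditional states |0⟩ and |1⟩ and hence W_{{Π_a}} = 1; therefore δW = 1 (the maximum possible) independently of C. -/

import Mathlib

open Matrix Kronecker BigOperators ComplexOrder

noncomputable section

/-- Partial trace over the second (ancilla) factor. -/
def ptrA {d m : ℕ} (ρ : Matrix (Fin d × Fin m) (Fin d × Fin m) ℂ) :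
    Matrix (Fin d) (Fin d) ℂ := fun i j => ∑ a, ρ (i, a) (j, a)

/-- Partial trace over the first (system) factor. -/
def ptrS {d m : ℕ} (ρ : Matrix (Fin d × Fin m) (Fin d × Fin m) ℂ) :
    Matrix (Fin m) (Fin m) ℂ := fun x y => ∑ i, ρ (i, x) (i, y)

/-- Probability of outcome corresponding to ancilla projector `P`. -/
def outcomeProb {d m : ℕ} (ρ : Matrix (Fin d × Fin m) (Fin d × Fin m) ℂ)
    (P : Matrix (Fin m) (Fin m) ℂ) : ℝ :=
  ((((1 : Matrix (Fin d) (Fin d) ℂ)) ⊗ₖ P) * ρ).trace.re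

/-- Normalized conditional state of the system after ancilla outcome `P`. -/
def condState {d m : ℕ} (ρ : Matrix (Fin d × Fin m) (Fin d × Fin m) ℂ)
    (P : Matrix (Fin m) (Fin m) ℂ) : Matrix (Fin d) (Fin d) ℂ :=
  (outcomeProb ρ P)⁻¹ •
    ptrA (((1 : Matrix (Fin d) (Fin d) ℂ) ⊗ₖ P) * ρ *
      ((1 : Matrix (Fin d) (Fin d) ℂ) ⊗ₖ P))

/-- Passive energy `∑ₖ rₖ εₖ`: decreasing eigenvalues of `σ` paired with the
increasingly ordered energies `ε`. -/
def passiveEnergy {d : ℕ} (ε : Fin d → ℝ) (σ : Matrix (Fin d) (Fin d) ℂ) : ℝ :=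
  if h : σ.IsHermitian then
    ∑ k, (h.eigenvalues ∘ (Tuple.sort h.eigenvalues)) k.rev * ε k
  else 0

/-- The daemonic gain `δW`: supremum over complete projective ancilla
measurements of `W_{Π} - W`. -/
def deltaW {d m : ℕ} (ε : Fin d → ℝ)
    (ρ : Matrix (Fin d × Fin m) (Fin d × Fin m) ℂ) : ℝ :=
  sSup {g : ℝ | ∃ (n : ℕ) (P : Fin n → Matrix (Fin m) (Fin m) ℂ),
    (∀ a, (P a).IsHermitian) ∧ (∀ a b, P a * P b = if a = b then P a else 0) ∧
    (∑ a, P a = 1) ∧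
    g = passiveEnergy ε (ptrA ρ) -
      ∑ a, outcomeProb ρ (P a) * passiveEnergy ε (condState ρ (P a))}

end

/-- The two-qubit state (|00⟩⟨00| + |11⟩⟨11| + C(|00⟩⟨11| + |11⟩⟨00|))/2. -/
noncomputable def bellMix (C : ℝ) :
    Matrix (Fin 2 × Fin 2) (Fin 2 × Fin 2) ℂ := fun p q =>
  if (p = ((0 : Fin 2), (0 : Fin 2)) ∧ q = ((0 : Fin 2), (0 : Fin 2))) ∨
     (p = ((1 : Fin 2), (1 : Fin 2)) ∧ q = ((1 : Fin 2), (1 : Fin 2))) then (1/2 : ℂ)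
  else if (p = ((0 : Fin 2), (0 : Fin 2)) ∧ q = ((1 : Fin 2), (1 : Fin 2))) ∨
          (p = ((1 : Fin 2), (1 : Fin 2)) ∧ q = ((0 : Fin 2), (0 : Fin 2))) then
    ((C / 2 : ℝ) : ℂ)
  else 0

/-- The computational-basis measurement on the ancilla qubit. -/
noncomputable def compMeas : Fin 2 → Matrix (Fin 2) (Fin 2) ℂ :=
  ![!![1, 0; 0, 0], !![0, 0; 0, 1]]

/-!
Writing `bellMix C` as the Bell mixture `(1 + C)/2 |Φ⁺⟩⟨Φ⁺| + (1 - C)/2 |Φ⁻⟩⟨Φ⁻|` shows that it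
is a state for `0 ≤ C ≤ 1`. After any projective measurement of the ancilla the conditional
system states are again states, and a state `σ` has passive energy at least `ε₀ · tr σ` when all
energies are `≥ ε₀`; so the averaged conditional passive energy is at least `-1`, and `δW` is at
most `0 + 1`, the reduced state `1/2` having zero passive energy. The computational-basis
measurement attains the bound: its conditional states `|0⟩⟨0|`, `|1⟩⟨1|` are pure, with passive
energy `-1`.
-/

section PassiveEnergy

variable {d : ℕ}

lemma Matrix.IsHermitian.sum_sort_eigenvalues {A : Matrix (Fin d) (Fin d) ℂ} (hA : A.IsHermitian) :
    ∑ k, (hA.eigenvalues ∘ Tuple.sort hA.eigenvalues) k = A.trace.re := by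
  rw [hA.trace_eq_sum_eigenvalues, Complex.re_sum]
  exact Equiv.sum_comp (Tuple.sort hA.eigenvalues) hA.eigenvalues

lemma Matrix.IsHermitian.prod_sort_eigenvalues {A : Matrix (Fin d) (Fin d) ℂ} (hA : A.IsHermitian) :
    ∏ k, (hA.eigenvalues ∘ Tuple.sort hA.eigenvalues) k = A.det.re := by
  rw [hA.det_eq_prod_eigenvalues, ← RCLike.ofReal_prod]
  exact Equiv.prod_comp (Tuple.sort hA.eigenvalues) hA.eigenvalues

lemma mul_re_trace_le_passiveEnergy {ε : Fin d → ℝ} {e : ℝ} (he : ∀ k, e ≤ ε k)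
    {σ : Matrix (Fin d) (Fin d) ℂ} (hσ : σ.PosSemidef) :
    e * σ.trace.re ≤ passiveEnergy ε σ := by
  rw [passiveEnergy, dif_pos hσ.1, ← hσ.1.sum_sort_eigenvalues,
    ← Equiv.sum_comp Fin.revPerm, Finset.mul_sum]
  refine Finset.sum_le_sum fun k _ => ?_
  rw [mul_comm]
  exact mul_le_mul_of_nonneg_left (he k) (hσ.eigenvalues_nonneg _)

/-- For a qubit the passive energy relative to `-σ_z` is minus the eigenvalue gap. -/
lemma passiveEnergy_qubit {σ : Matrix (Fin 2) (Fin 2) ℂ} (hσ : σ.IsHermitian) :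
    passiveEnergy ![-1, 1] σ = -√(σ.trace.re ^ 2 - 4 * σ.det.re) := by
  set r := hσ.eigenvalues ∘ Tuple.sort hσ.eigenvalues
  have hmono : r 0 ≤ r 1 := Tuple.monotone_sort hσ.eigenvalues (by decide)
  have htr : r 0 + r 1 = σ.trace.re := by
    rw [← hσ.sum_sort_eigenvalues, Fin.sum_univ_two]
  have hdet : r 0 * r 1 = σ.det.re := by
    rw [← hσ.prod_sort_eigenvalues, Fin.prod_univ_two]
  have hgap : σ.trace.re ^ 2 - 4 * σ.det.re = (r 1 - r 0) ^ 2 := by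
    rw [← htr, ← hdet]; ring
  rw [hgap, Real.sqrt_sq (by linarith), passiveEnergy, dif_pos hσ, Fin.sum_univ_two]
  simp [r, sub_eq_neg_add]

end PassiveEnergy

section Measurement

variable {d m : ℕ}

lemma ptrA_eq_sum_submatrix (M : Matrix (Fin d × Fin m) (Fin d × Fin m) ℂ) :
    ptrA M = ∑ a, M.submatrix (·, a) (·, a) := by
  ext i j
  simp [ptrA, Matrix.sum_apply]

lemma Matrix.PosSemidef.ptrA {M : Matrix (Fin d × Fin m) (Fin d × Fin m) ℂ} (hM : M.PosSemidef) :
    (ptrA M).PosSemidef := by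
  rw [ptrA_eq_sum_submatrix]
  exact Matrix.posSemidef_sum _ fun a _ => hM.submatrix _

lemma trace_ptrA (M : Matrix (Fin d × Fin m) (Fin d × Fin m) ℂ) : (ptrA M).trace = M.trace := by
  simp only [Matrix.trace, ptrA, Matrix.diag, Fintype.sum_prod_type]

lemma one_kronecker_sum {n : ℕ} (P : Fin n → Matrix (Fin m) (Fin m) ℂ) :
    (1 : Matrix (Fin d) (Fin d) ℂ) ⊗ₖ ∑ a, P a = ∑ a, (1 : Matrix (Fin d) (Fin d) ℂ) ⊗ₖ P a := by
  ext p q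
  simp [Matrix.kroneckerMap_apply, Finset.mul_sum, Matrix.sum_apply]

variable {ρ : Matrix (Fin d × Fin m) (Fin d × Fin m) ℂ} {P : Matrix (Fin m) (Fin m) ℂ}

lemma outcomeProb_eq_re_trace_conj (hP : P * P = P) :
    outcomeProb ρ P = (((1 : Matrix (Fin d) (Fin d) ℂ) ⊗ₖ P) * ρ *
      ((1 : Matrix (Fin d) (Fin d) ℂ) ⊗ₖ P)).trace.re := by
  rw [Matrix.trace_mul_cycle, ← Matrix.mul_kronecker_mul, Matrix.one_mul, hP, outcomeProb]

lemma Matrix.PosSemidef.conj_one_kronecker (hρ : ρ.PosSemidef) (hP : P.IsHermitian) :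
    (((1 : Matrix (Fin d) (Fin d) ℂ) ⊗ₖ P) * ρ *
      ((1 : Matrix (Fin d) (Fin d) ℂ) ⊗ₖ P)).PosSemidef := by
  have hB : ((1 : Matrix (Fin d) (Fin d) ℂ) ⊗ₖ P)ᴴ = 1 ⊗ₖ P := by
    rw [Matrix.conjTranspose_kronecker, Matrix.conjTranspose_one, hP.eq]
  simpa only [hB] using hρ.mul_mul_conjTranspose_same ((1 : Matrix (Fin d) (Fin d) ℂ) ⊗ₖ P)

lemma outcomeProb_nonneg (hρ : ρ.PosSemidef) (hP : P.IsHermitian) (hPP : P * P = P) :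
    0 ≤ outcomeProb ρ P := by
  rw [outcomeProb_eq_re_trace_conj hPP]
  exact Complex.nonneg_iff.mp (hρ.conj_one_kronecker hP).trace_nonneg |>.1

lemma sum_outcomeProb {n : ℕ} {P : Fin n → Matrix (Fin m) (Fin m) ℂ} (hsum : ∑ a, P a = 1) :
    ∑ a, outcomeProb ρ (P a) = ρ.trace.re := by
  simp only [outcomeProb, ← Complex.re_sum, ← Matrix.trace_sum, ← Finset.sum_mul,
    ← one_kronecker_sum, hsum, Matrix.one_kronecker_one, Matrix.one_mul]

lemma Matrix.PosSemidef.condState (hρ : ρ.PosSemidef) (hP : P.IsHermitian) (hPP : P * P = P) :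
    (condState ρ P).PosSemidef :=
  ((hρ.conj_one_kronecker hP).ptrA).smul (inv_nonneg.mpr (outcomeProb_nonneg hρ hP hPP))

/-- `p * tr (p⁻¹ • σ) = p` holds also when `p = 0`, since then `tr σ = p = 0`. -/
lemma outcomeProb_mul_re_trace_condState (hρ : ρ.PosSemidef) (hP : P.IsHermitian)
    (hPP : P * P = P) : outcomeProb ρ P * (condState ρ P).trace.re = outcomeProb ρ P := by
  have htr : (ptrA (((1 : Matrix (Fin d) (Fin d) ℂ) ⊗ₖ P) * ρ *
      ((1 : Matrix (Fin d) (Fin d) ℂ) ⊗ₖ P))).trace = (outcomeProb ρ P : ℂ) := by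
    rw [trace_ptrA, outcomeProb_eq_re_trace_conj hPP]
    exact Complex.eq_re_of_ofReal_le (r := 0)
      (by simpa only [Complex.ofReal_zero] using (hρ.conj_one_kronecker hP).trace_nonneg)
  rw [condState, Matrix.trace_smul, htr, Complex.real_smul, ← Complex.ofReal_mul,
    Complex.ofReal_re, ← mul_assoc, mul_inv_mul_cancel]

lemma mul_re_trace_le_sum_outcomeProb_mul_passiveEnergy {ε : Fin d → ℝ} {e : ℝ}
    (he : ∀ k, e ≤ ε k) (hρ : ρ.PosSemidef) {n : ℕ} {P : Fin n → Matrix (Fin m) (Fin m) ℂ}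
    (hherm : ∀ a, (P a).IsHermitian) (hidem : ∀ a, P a * P a = P a) (hsum : ∑ a, P a = 1) :
    e * ρ.trace.re ≤ ∑ a, outcomeProb ρ (P a) * passiveEnergy ε (condState ρ (P a)) := by
  rw [← sum_outcomeProb hsum, Finset.mul_sum]
  refine Finset.sum_le_sum fun a _ => ?_
  calc e * outcomeProb ρ (P a)
      = outcomeProb ρ (P a) * (e * (condState ρ (P a)).trace.re) := by
        rw [mul_left_comm, outcomeProb_mul_re_trace_condState hρ (hherm a) (hidem a)]
    _ ≤ outcomeProb ρ (P a) * passiveEnergy ε (condState ρ (P a)) :=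
        mul_le_mul_of_nonneg_left
          (mul_re_trace_le_passiveEnergy he (hρ.condState (hherm a) (hidem a)))
          (outcomeProb_nonneg hρ (hherm a) (hidem a))

end Measurement

lemma deltaW_eq_of_sum_eq {d m : ℕ} {ε : Fin d → ℝ} {e : ℝ} (he : ∀ k, e ≤ ε k)
    {ρ : Matrix (Fin d × Fin m) (Fin d × Fin m) ℂ} (hρ : ρ.PosSemidef)
    {n : ℕ} (P : Fin n → Matrix (Fin m) (Fin m) ℂ) (hherm : ∀ a, (P a).IsHermitian)
    (horth : ∀ a b, P a * P b = if a = b then P a else 0) (hsum : ∑ a, P a = 1)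
    (hopt : ∑ a, outcomeProb ρ (P a) * passiveEnergy ε (condState ρ (P a)) = e * ρ.trace.re) :
    deltaW ε ρ = passiveEnergy ε (ptrA ρ) - e * ρ.trace.re := by
  refine IsGreatest.csSup_eq ⟨⟨n, P, hherm, horth, hsum, by rw [hopt]⟩, ?_⟩
  rintro g ⟨n', Q, hQherm, hQorth, hQsum, rfl⟩
  have hidem : ∀ a, Q a * Q a = Q a := fun a => by simpa using hQorth a a
  linarith [mul_re_trace_le_sum_outcomeProb_mul_passiveEnergy he hρ hQherm hidem hQsum]

def bellVec (s : ℂ) : Fin 2 × Fin 2 → ℂ := Pi.single (0, 0) 1 + Pi.single (1, 1) s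

lemma bellMix_eq (C : ℝ) :
    bellMix C = ((1 + C) / 4) • vecMulVec (bellVec 1) (star (bellVec 1)) +
      ((1 - C) / 4) • vecMulVec (bellVec (-1)) (star (bellVec (-1))) := by
  ext ⟨i, j⟩ ⟨k, l⟩
  fin_cases i <;> fin_cases j <;> fin_cases k <;> fin_cases l <;>
    simp [bellMix, bellVec, vecMulVec, Pi.single_apply, Complex.ext_iff] <;> ring

lemma bellMix_posSemidef {C : ℝ} (hC0 : 0 ≤ C) (hC1 : C ≤ 1) : (bellMix C).PosSemidef := by
  rw [bellMix_eq]
  exact ((posSemidef_vecMulVec_self_star _).smul (by linarith)).add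
    ((posSemidef_vecMulVec_self_star _).smul (by linarith))

lemma bellMix_trace (C : ℝ) : (bellMix C).trace = 1 := by
  norm_num [Matrix.trace, Fintype.sum_prod_type, bellMix]

lemma ptrA_bellMix (C : ℝ) : ptrA (bellMix C) = (1 / 2 : ℂ) • (1 : Matrix (Fin 2) (Fin 2) ℂ) := by
  ext i j
  fin_cases i <;> fin_cases j <;> simp [ptrA, bellMix]

lemma compMeas_eq_single (a : Fin 2) : compMeas a = Matrix.single a a 1 := by
  ext i j
  fin_cases a <;> fin_cases i <;> fin_cases j <;> rfl

lemma isHermitian_single_one {n : Type*} [DecidableEq n] (a : n) :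
    (Matrix.single a a (1 : ℂ)).IsHermitian := by
  rw [Matrix.IsHermitian, Matrix.conjTranspose_single, star_one]

lemma compMeas_isHermitian (a : Fin 2) : (compMeas a).IsHermitian :=
  compMeas_eq_single a ▸ isHermitian_single_one a

lemma compMeas_mul (a b : Fin 2) : compMeas a * compMeas b = if a = b then compMeas a else 0 := by
  simp only [compMeas_eq_single]
  split_ifs with h
  · rw [h, Matrix.single_mul_single_same, one_mul]
  · exact Matrix.single_mul_single_of_ne (h := h) ..

lemma sum_compMeas : ∑ a, compMeas a = 1 := by
  simp only [compMeas_eq_single, Matrix.sum_single_one]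

lemma outcomeProb_bellMix_compMeas (C : ℝ) (a : Fin 2) :
    outcomeProb (bellMix C) (compMeas a) = 1 / 2 := by
  fin_cases a <;>
    simp [outcomeProb, Matrix.trace, Matrix.mul_apply, Fintype.sum_prod_type, bellMix, compMeas]

lemma condState_bellMix_compMeas (C : ℝ) (a : Fin 2) :
    condState (bellMix C) (compMeas a) = Matrix.single a a 1 := by
  rw [condState, outcomeProb_bellMix_compMeas]
  ext i j
  fin_cases a <;> fin_cases i <;> fin_cases j <;>
    simp [ptrA, Matrix.mul_apply, Fintype.sum_prod_type, bellMix, compMeas]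

lemma passiveEnergy_single (a : Fin 2) :
    passiveEnergy ![-1, 1] (Matrix.single a a (1 : ℂ)) = -1 := by
  rw [passiveEnergy_qubit (isHermitian_single_one a)]
  fin_cases a <;> simp [Matrix.det_fin_two]

/-- for the state (|00⟩⟨00|+|11⟩⟨11|+C(|00⟩⟨11|+h.c.))/2 with
H_S = −σ_z: the reduced state is 1/2, so W = 0; the computational-basis
measurement yields pure conditional states and W_{Πₐ} = 1; hence δW = 1
(the maximum), independently of C. -/
theorem bellMix_maximal_gain (C : ℝ) (hC0 : 0 ≤ C) (hC1 : C ≤ 1) :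
    ptrA (bellMix C) = (1/2 : ℂ) • (1 : Matrix (Fin 2) (Fin 2) ℂ) ∧
    ((ptrA (bellMix C)) * (!![-1, 0; 0, 1] : Matrix (Fin 2) (Fin 2) ℂ)).trace.re -
        passiveEnergy ![(-1 : ℝ), 1] (ptrA (bellMix C)) = 0 ∧
    ((ptrA (bellMix C)) * (!![-1, 0; 0, 1] : Matrix (Fin 2) (Fin 2) ℂ)).trace.re -
        ∑ a, outcomeProb (bellMix C) (compMeas a) *
          passiveEnergy ![(-1 : ℝ), 1] (condState (bellMix C) (compMeas a)) = 1 ∧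
    deltaW ![(-1 : ℝ), 1] (bellMix C) = 1 := by
  have hρ := bellMix_posSemidef hC0 hC1
  have hρS := ptrA_bellMix C
  have hW : ((ptrA (bellMix C)) * (!![-1, 0; 0, 1] : Matrix (Fin 2) (Fin 2) ℂ)).trace.re = 0 := by
    rw [hρS]
    simp [Matrix.trace_fin_two]
  have hpassive : passiveEnergy ![(-1 : ℝ), 1] (ptrA (bellMix C)) = 0 := by
    rw [passiveEnergy_qubit hρ.ptrA.1, hρS]
    norm_num [Matrix.trace_fin_two, Matrix.det_fin_two]
  have hmeas : ∑ a, outcomeProb (bellMix C) (compMeas a) *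
      passiveEnergy ![(-1 : ℝ), 1] (condState (bellMix C) (compMeas a)) = -1 := by
    simp only [outcomeProb_bellMix_compMeas, condState_bellMix_compMeas, passiveEnergy_single]
    norm_num
  have hδ := deltaW_eq_of_sum_eq (ε := ![-1, 1]) (e := -1) (by simp [Fin.forall_fin_two]) hρ
    compMeas compMeas_isHermitian compMeas_mul sum_compMeas
    (by rw [hmeas, bellMix_trace]; norm_num)
  refine ⟨hρS, by rw [hW, hpassive]; norm_num, by rw [hW, hmeas]; norm_num, ?_⟩
  rw [hδ, hpassive, bellMix_trace]
  norm_num
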